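/- arXiv:1706.09374 — 2 statements merged into one kernel-verified Lean document; each statement's English description precedes it below -/
import Mathlib

section
/- Let K ≥ 1 and 1/2 < p₂ ≤ p₁ be real numbers with p₁ < 2p₂ − 3/2, and let V̄ : (0,∞) → ℝ be a measurable locally bounded function such that y^(2p₂) ≤ exp(2·V̄(y)) ≤ y^(2p₁) for all y ≥ K. Suppose v¹ : [K,∞) → [0,∞) is measurable and satisfies v¹(y) ≤ C₁·y^(2(p₁−p₂)+2) for all y ≥ K with some constant C₁ > 0. Then for every ξ ≥ K, v²(ξ) := 4·∫_K^ξ exp(2·V̄(y₁)) · ( ∫_{y₁}^∞ v¹(y₂)·exp(−2·V̄(y₂)) dy₂ ) dy₁ is finite and there exists a constant C₂ (depending only on p₁, p₂, C₁) such that v²(ξ) ≤ C₂·ξ^(4(p₁−p₂+1)). -/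
open MeasureTheory Set Real

/-!
The weight bounds give `v¹ e^{-2V̄} ≤ C₁ y^α` with `α = 2p₁ - 4p₂ + 2 < -1`, so the inner
integral converges and is at most `C₁ y^(α+1) / (-(α+1))`. Multiplying by `e^{2V̄} ≤ y^(2p₁)`
bounds the outer integrand by a multiple of `y^(4(p₁-p₂+1)-1)`, whose integral over `[K, ξ]` is
at most a multiple of `ξ^(4(p₁-p₂+1))`. The inner integral is monotone in its lower limit, which
makes the outer integrand measurable.
-/

theorem mul_exp_neg_le_rpow_sub {v w y C r s : ℝ} (hy : 0 < y) (hv0 : 0 ≤ v)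
    (hv : v ≤ C * y ^ r) (hw : y ^ s ≤ exp w) : v * exp (-w) ≤ C * y ^ (r - s) :=
  calc v * exp (-w) ≤ C * y ^ r * y ^ (-s) := by
        refine mul_le_mul hv ?_ (exp_nonneg _) (hv0.trans hv)
        rw [exp_neg, rpow_neg hy.le]
        exact inv_anti₀ (by positivity) hw
    _ = C * y ^ (r - s) := by rw [mul_assoc, ← rpow_add hy, sub_eq_add_neg]

section PowerDecay

variable {f : ℝ → ℝ} {a C α : ℝ}

theorem integrableOn_Ioi_of_norm_le_rpow (ha : 0 < a) (hα : α < -1)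
    (hfm : AEStronglyMeasurable f (volume.restrict (Ioi a)))
    (hf : ∀ y, a < y → ‖f y‖ ≤ C * y ^ α) : IntegrableOn f (Ioi a) :=
  ((integrableOn_Ioi_rpow_of_lt hα ha).const_mul C).mono' hfm <|
    (ae_restrict_iff' measurableSet_Ioi).2 (ae_of_all _ hf)

theorem setIntegral_Ioi_le_rpow (ha : 0 < a) (hα : α < -1) (hfi : IntegrableOn f (Ioi a))
    (hf : ∀ y, a < y → f y ≤ C * y ^ α) :
    ∫ y in Ioi a, f y ≤ C / (-(α + 1)) * a ^ (α + 1) :=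
  calc ∫ y in Ioi a, f y ≤ ∫ y in Ioi a, C * y ^ α :=
        setIntegral_mono_on hfi ((integrableOn_Ioi_rpow_of_lt hα ha).const_mul C)
          measurableSet_Ioi hf
    _ = C / (-(α + 1)) * a ^ (α + 1) := by
        rw [integral_const_mul, integral_Ioi_rpow_of_lt hα ha, div_neg]
        ring

theorem antitoneOn_setIntegral_Ioi (hfi : IntegrableOn f (Ioi a))
    (hf : ∀ y, a < y → 0 ≤ f y) : AntitoneOn (fun b => ∫ y in Ioi b, f y) (Ici a) :=
  fun _ hb _ _ hbc => setIntegral_mono_set (hfi.mono_set (Ioi_subset_Ioi hb))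
    ((ae_restrict_iff' measurableSet_Ioi).2 (ae_of_all _ fun y hy => hf y (hb.trans_lt hy)))
    (Ioi_subset_Ioi hbc).eventuallyLE

theorem aestronglyMeasurable_mul_setIntegral_Ioi {w : ℝ → ℝ} {s : Set ℝ} (hw : Measurable w)
    (hfi : IntegrableOn f (Ioi a)) (hf : ∀ y, a < y → 0 ≤ f y) (hs : s ⊆ Ici a) :
    AEStronglyMeasurable (fun b => w b * ∫ y in Ioi b, f y) (volume.restrict s) :=
  (hw.aemeasurable.mul ((aemeasurable_restrict_of_antitoneOn measurableSet_Ici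
    (antitoneOn_setIntegral_Ioi hfi hf)).mono_measure
      (Measure.restrict_mono hs le_rfl))).aestronglyMeasurable

theorem mul_setIntegral_Ioi_le_rpow {w b γ : ℝ} (ha : 0 < a) (hab : a ≤ b) (hα : α < -1)
    (hfi : IntegrableOn f (Ioi a)) (hf0 : ∀ y, a < y → 0 ≤ f y)
    (hf : ∀ y, a < y → f y ≤ C * y ^ α) (hw : w ≤ b ^ γ) :
    w * ∫ y in Ioi b, f y ≤ C / (-(α + 1)) * b ^ (γ + α + 1) := by
  have hb : 0 < b := ha.trans_le hab
  calc w * ∫ y in Ioi b, f y ≤ b ^ γ * (C / (-(α + 1)) * b ^ (α + 1)) :=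
        mul_le_mul hw (setIntegral_Ioi_le_rpow hb hα (hfi.mono_set (Ioi_subset_Ioi hab))
          fun y hy => hf y (hab.trans_lt hy))
          (setIntegral_nonneg measurableSet_Ioi fun y hy => hf0 y (hab.trans_lt hy))
          (rpow_nonneg hb.le γ)
    _ = C / (-(α + 1)) * b ^ (γ + α + 1) := by
        rw [mul_left_comm, ← rpow_add hb, add_assoc]

end PowerDecay

section PowerGrowth

variable {h : ℝ → ℝ} {a b D β : ℝ}

theorem intervalIntegrable_of_norm_le_rpow (ha : 0 < a) (hab : a ≤ b)
    (hm : AEStronglyMeasurable h (volume.restrict (Ioc a b)))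
    (hh : ∀ y ∈ Ioc a b, ‖h y‖ ≤ D * y ^ β) : IntervalIntegrable h volume a b := by
  have hcont : ContinuousOn (fun y => D * y ^ β) (Icc a b) :=
    continuousOn_const.mul
      (continuousOn_id.rpow_const fun y hy => Or.inl (ha.trans_le hy.1).ne')
  refine (hcont.intervalIntegrable_of_Icc hab).mono_fun' (by rwa [uIoc_of_le hab]) ?_
  rw [uIoc_of_le hab]
  exact (ae_restrict_iff' measurableSet_Ioc).2 (ae_of_all _ hh)

theorem intervalIntegral_le_of_le_rpow (ha : 0 ≤ a) (hab : a ≤ b) (hβ : -1 < β) (hD : 0 ≤ D)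
    (hi : IntervalIntegrable h volume a b) (hh : ∀ y ∈ Icc a b, h y ≤ D * y ^ β) :
    ∫ y in a..b, h y ≤ D / (β + 1) * b ^ (β + 1) :=
  calc ∫ y in a..b, h y ≤ ∫ y in a..b, D * y ^ β :=
        intervalIntegral.integral_mono_on hab hi
          ((intervalIntegral.intervalIntegrable_rpow' hβ).const_mul D) hh
    _ = D / (β + 1) * (b ^ (β + 1) - a ^ (β + 1)) := by
        rw [intervalIntegral.integral_const_mul, integral_rpow (Or.inl hβ)]
        ring
    _ ≤ D / (β + 1) * b ^ (β + 1) := by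
        have : 0 < β + 1 := by linarith
        gcongr
        exact sub_le_self _ (rpow_nonneg ha _)

end PowerGrowth

theorem second_moment_bound_general
    (K p₁ p₂ : ℝ) (hK : 1 ≤ K) (hp : p₂ ≤ p₁)
    (hp' : p₁ < 2 * p₂ - 3 / 2)
    (Vbar : ℝ → ℝ) (hmeas : Measurable Vbar)
    (hlb : ∀ y : ℝ, K ≤ y → y ^ (2 * p₂) ≤ Real.exp (2 * Vbar y))
    (hub : ∀ y : ℝ, K ≤ y → Real.exp (2 * Vbar y) ≤ y ^ (2 * p₁))
    (v₁ : ℝ → ℝ) (hv₁meas : Measurable v₁)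
    (hv₁nonneg : ∀ y : ℝ, K ≤ y → 0 ≤ v₁ y)
    (C₁ : ℝ) (hC₁ : 0 < C₁)
    (hv₁ : ∀ y : ℝ, K ≤ y → v₁ y ≤ C₁ * y ^ (2 * (p₁ - p₂) + 2)) :
    (∀ ξ : ℝ, K ≤ ξ →
      (∀ y₁ : ℝ, K ≤ y₁ →
          IntegrableOn (fun y₂ => v₁ y₂ * Real.exp (-(2 * Vbar y₂)))
            (Set.Ioi y₁)) ∧
        IntervalIntegrable
          (fun y₁ => Real.exp (2 * Vbar y₁) *
            ∫ y₂ in Set.Ioi y₁, v₁ y₂ * Real.exp (-(2 * Vbar y₂)))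
          volume K ξ) ∧
      ∃ C₂ : ℝ, ∀ ξ : ℝ, K ≤ ξ →
        4 * ∫ y₁ in K..ξ, Real.exp (2 * Vbar y₁) *
            ∫ y₂ in Set.Ioi y₁, v₁ y₂ * Real.exp (-(2 * Vbar y₂)) ≤
          C₂ * ξ ^ (4 * (p₁ - p₂ + 1)) := by
  have hK0 : 0 < K := by linarith
  set α := 2 * (p₁ - p₂) + 2 - 2 * p₂ with hα_def
  have hα : α < -1 := by linarith
  set f := fun y => v₁ y * exp (-(2 * Vbar y))
  have hf0 : ∀ y, K < y → 0 ≤ f y := fun y hy => mul_nonneg (hv₁nonneg y hy.le) (exp_nonneg _)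
  have hfα : ∀ y, K < y → f y ≤ C₁ * y ^ α := fun y hy =>
    mul_exp_neg_le_rpow_sub (hK0.trans hy) (hv₁nonneg y hy.le) (hv₁ y hy.le) (hlb y hy.le)
  have hfi : IntegrableOn f (Ioi K) :=
    integrableOn_Ioi_of_norm_le_rpow hK0 hα (by fun_prop)
      fun y hy => (norm_of_nonneg (hf0 y hy)).trans_le (hfα y hy)
  set g := fun y => exp (2 * Vbar y) * ∫ z in Ioi y, f z
  have hg0 : ∀ y, K ≤ y → 0 ≤ g y := fun y hy => mul_nonneg (exp_nonneg _)
    (setIntegral_nonneg measurableSet_Ioi fun z hz => hf0 z (hy.trans_lt hz))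
  have hg : ∀ y, K ≤ y → g y ≤ C₁ / (-(α + 1)) * y ^ (2 * p₁ + α + 1) := fun y hy =>
    mul_setIntegral_Ioi_le_rpow hK0 hy hα hfi hf0 hfα (hub y hy)
  have hgi : ∀ ξ, K ≤ ξ → IntervalIntegrable g volume K ξ := fun ξ hξ =>
    intervalIntegrable_of_norm_le_rpow hK0 hξ
      (aestronglyMeasurable_mul_setIntegral_Ioi (by fun_prop) hfi hf0
        (Ioc_subset_Icc_self.trans Icc_subset_Ici_self))
      fun y hy => (norm_of_nonneg (hg0 y hy.1.le)).trans_le (hg y hy.1.le)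
  refine ⟨fun ξ hξ => ⟨fun y hy => hfi.mono_set (Ioi_subset_Ioi hy), hgi ξ hξ⟩,
    4 * (C₁ / (-(α + 1)) / (4 * (p₁ - p₂ + 1))), fun ξ hξ => ?_⟩
  have hexp : 2 * p₁ + α + 1 + 1 = 4 * (p₁ - p₂ + 1) := by rw [hα_def]; ring
  have hbound := intervalIntegral_le_of_le_rpow hK0.le hξ (by linarith)
    (div_nonneg hC₁.le (by linarith)) (hgi ξ hξ) fun y hy => hg y hy.1
  rw [hexp] at hbound
  exact (mul_le_mul_of_nonneg_left hbound zero_le_four).trans_eq (mul_assoc _ _ _).symm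

/-- Under `y^(2p₂) ≤ exp(2·V̄(y)) ≤ y^(2p₁)` for `y ≥ K` (with
`K ≥ 1`, `1/2 < p₂ ≤ p₁`, `p₁ < 2p₂ − 3/2`), if `v¹ ≥ 0` is measurable with
`v¹(y) ≤ C₁·y^(2(p₁−p₂)+2)` for `y ≥ K`, then for every `ξ ≥ K`
`v²(ξ) = 4·∫_K^ξ e^{2V̄(y₁)} (∫_{y₁}^∞ v¹(y₂) e^{−2V̄(y₂)} dy₂) dy₁`
is finite (all integrals involved converge), and there is a constant `C₂`
(depending only on `p₁, p₂, C₁`) with `v²(ξ) ≤ C₂·ξ^(4(p₁−p₂+1))`. -/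
theorem second_moment_bound
    (K p₁ p₂ : ℝ) (hK : 1 ≤ K) (hp₂ : 1 / 2 < p₂) (hp : p₂ ≤ p₁)
    (hp' : p₁ < 2 * p₂ - 3 / 2)
    (Vbar : ℝ → ℝ) (hmeas : Measurable Vbar)
    (hloc : ∀ a b : ℝ, 0 < a → ∃ M : ℝ, ∀ y ∈ Set.Icc a b, |Vbar y| ≤ M)
    (hlb : ∀ y : ℝ, K ≤ y → y ^ (2 * p₂) ≤ Real.exp (2 * Vbar y))
    (hub : ∀ y : ℝ, K ≤ y → Real.exp (2 * Vbar y) ≤ y ^ (2 * p₁))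
    (v₁ : ℝ → ℝ) (hv₁meas : Measurable v₁)
    (hv₁nonneg : ∀ y : ℝ, K ≤ y → 0 ≤ v₁ y)
    (C₁ : ℝ) (hC₁ : 0 < C₁)
    (hv₁ : ∀ y : ℝ, K ≤ y → v₁ y ≤ C₁ * y ^ (2 * (p₁ - p₂) + 2)) :
    (∀ ξ : ℝ, K ≤ ξ →
      (∀ y₁ : ℝ, K ≤ y₁ →
          IntegrableOn (fun y₂ => v₁ y₂ * Real.exp (-(2 * Vbar y₂)))
            (Set.Ioi y₁)) ∧
        IntervalIntegrable
          (fun y₁ => Real.exp (2 * Vbar y₁) *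
            ∫ y₂ in Set.Ioi y₁, v₁ y₂ * Real.exp (-(2 * Vbar y₂)))
          volume K ξ) ∧
      ∃ C₂ : ℝ, ∀ ξ : ℝ, K ≤ ξ →
        4 * ∫ y₁ in K..ξ, Real.exp (2 * Vbar y₁) *
            ∫ y₂ in Set.Ioi y₁, v₁ y₂ * Real.exp (-(2 * Vbar y₂)) ≤
          C₂ * ξ ^ (4 * (p₁ - p₂ + 1)) :=
  second_moment_bound_general K p₁ p₂ hK hp hp' Vbar hmeas hlb hub v₁ hv₁meas hv₁nonneg C₁ hC₁ hv₁
end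

section
/- Let K ≥ 1 and 1/2 < p₂ ≤ p₁ be real numbers, let V̄ : (0,∞) → ℝ be a measurable locally bounded function with y^(2p₂) ≤ exp(2·V̄(y)) ≤ y^(2p₁) for all y ≥ K, and let n ≥ 1 be an integer with 2(n−1)(1+p₁−p₂) − 2p₂ < −1. Suppose w : [K,∞) → [0,∞) is measurable and satisfies w(y) ≤ C·y^(2(n−1)(1+p₁−p₂)) for all y ≥ K with some constant C > 0. Then for every ξ ≥ K the quantity 2n·∫_K^ξ exp(2·V̄(y₁)) · ( ∫_{y₁}^∞ w(y₂)·exp(−2·V̄(y₂)) dy₂ ) dy₁ is finite and bounded above by C'·ξ^(2n(1+p₁−p₂)) for some constant C' depending only on n, p₁, p₂, C. -/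
open MeasureTheory Set

/-!
The hypotheses on `w` and `V̄` make the inner integrand `w(y) e^{-2V̄(y)}` decay like `y^a` with
`a = 2(n−1)(1+p₁−p₂) − 2p₂ < −1`, so its tail from `y₁` is integrable and at most a constant times
`y₁^(a+1)`. Multiplying by `e^{2V̄(y₁)} ≤ y₁^(2p₁)` gives an outer integrand bounded by a constant
times `y₁^(2n(1+p₁−p₂)−1)`, a power with nonnegative exponent, hence by its value at `ξ` on
`[K, ξ]`; integrating over an interval of length at most `ξ` gives the power `2n(1+p₁−p₂)`.
-/

theorem mul_exp_neg_le_rpow {w V C p q y : ℝ} (hy : 0 < y) (hC : 0 ≤ C)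
    (hw : w ≤ C * y ^ q) (hV : y ^ (2 * p) ≤ Real.exp (2 * V)) :
    w * Real.exp (-(2 * V)) ≤ C * y ^ (q - 2 * p) := by
  have hexp : Real.exp (-(2 * V)) ≤ y ^ (-(2 * p)) := by
    rw [Real.exp_neg, Real.rpow_neg hy.le]
    exact inv_anti₀ (by positivity) hV
  calc w * Real.exp (-(2 * V)) ≤ C * y ^ q * y ^ (-(2 * p)) :=
        mul_le_mul hw hexp (Real.exp_nonneg _) (by positivity)
    _ = C * y ^ (q - 2 * p) := by rw [mul_assoc, ← Real.rpow_add hy, sub_eq_add_neg]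

section PowerTail

variable {f : ℝ → ℝ} {a c C : ℝ}

theorem integrableOn_Ioi_of_le_rpow (ha : a < -1) (hc : 0 < c)
    (hf : AEStronglyMeasurable f (volume.restrict (Ioi c))) (hf0 : ∀ x ∈ Ioi c, 0 ≤ f x)
    (hfC : ∀ x ∈ Ioi c, f x ≤ C * x ^ a) : IntegrableOn f (Ioi c) :=
  ((integrableOn_Ioi_rpow_of_lt ha hc).const_mul C).mono' hf <|
    (ae_restrict_iff' measurableSet_Ioi).mpr <| .of_forall fun x hx => by
      rw [Real.norm_of_nonneg (hf0 x hx)]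
      exact hfC x hx

theorem setIntegral_Ioi_le_of_le_rpow (ha : a < -1) (hc : 0 < c) (hf : IntegrableOn f (Ioi c))
    (hfC : ∀ x ∈ Ioi c, f x ≤ C * x ^ a) :
    ∫ x in Ioi c, f x ≤ C / -(a + 1) * c ^ (a + 1) := by
  calc ∫ x in Ioi c, f x ≤ ∫ x in Ioi c, C * x ^ a :=
        setIntegral_mono_on hf ((integrableOn_Ioi_rpow_of_lt ha hc).const_mul C)
          measurableSet_Ioi hfC
    _ = C / -(a + 1) * c ^ (a + 1) := by
        rw [integral_const_mul, integral_Ioi_rpow_of_lt ha hc]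
        field_simp [show a + 1 ≠ 0 by linarith]

theorem norm_mul_setIntegral_Ioi_le_rpow {g b : ℝ} (ha : a < -1) (hc : 0 < c)
    (hf : IntegrableOn f (Ioi c)) (hf0 : ∀ x ∈ Ioi c, 0 ≤ f x)
    (hfC : ∀ x ∈ Ioi c, f x ≤ C * x ^ a) (hg0 : 0 ≤ g) (hg : g ≤ c ^ b) :
    ‖g * ∫ x in Ioi c, f x‖ ≤ C / -(a + 1) * c ^ (b + a + 1) := by
  have hint0 : 0 ≤ ∫ x in Ioi c, f x := setIntegral_nonneg measurableSet_Ioi hf0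
  rw [Real.norm_of_nonneg (mul_nonneg hg0 hint0)]
  calc g * ∫ x in Ioi c, f x ≤ c ^ b * (C / -(a + 1) * c ^ (a + 1)) :=
        mul_le_mul hg (setIntegral_Ioi_le_of_le_rpow ha hc hf hfC) hint0 (by positivity)
    _ = C / -(a + 1) * c ^ (b + a + 1) := by rw [add_assoc b, Real.rpow_add hc b]; ring

end PowerTail

theorem measurable_setIntegral_Ioi {f : ℝ → ℝ} (hf : Measurable f) :
    Measurable fun y => ∫ x in Ioi y, f x := by
  have hjoint : Measurable (Function.uncurry fun y x : ℝ => (Ioi y).indicator f x) :=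
    Measurable.ite (measurableSet_lt measurable_fst measurable_snd) (hf.comp measurable_snd)
      measurable_const
  simpa only [integral_indicator measurableSet_Ioi] using
    hjoint.stronglyMeasurable.integral_prod_right.measurable

section BoundedOnInterval

variable {F : ℝ → ℝ} {K ξ M s : ℝ}

theorem intervalIntegrable_of_norm_le_const (hF : AEStronglyMeasurable F volume)
    (hFM : ∀ y ∈ uIoc K ξ, ‖F y‖ ≤ M) : IntervalIntegrable F volume K ξ :=
  (intervalIntegrable_const (c := M)).mono_fun' hF.restrict
    ((ae_restrict_iff' measurableSet_uIoc).mpr (.of_forall hFM))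

theorem intervalIntegral_le_mul_rpow_add_one (hK : 0 < K) (hKξ : K ≤ ξ) (hM : 0 ≤ M)
    (hFM : ∀ y ∈ uIoc K ξ, ‖F y‖ ≤ M * ξ ^ s) :
    ∫ y in K..ξ, F y ≤ M * ξ ^ (s + 1) := by
  have hξ : 0 < ξ := hK.trans_le hKξ
  calc ∫ y in K..ξ, F y ≤ ‖∫ y in K..ξ, F y‖ := Real.le_norm_self _
    _ ≤ M * ξ ^ s * |ξ - K| := intervalIntegral.norm_integral_le_of_norm_le_const hFM
    _ ≤ M * ξ ^ s * ξ := by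
        gcongr
        rw [abs_of_nonneg (sub_nonneg.mpr hKξ)]
        linarith
    _ = M * ξ ^ (s + 1) := by rw [Real.rpow_add_one hξ.ne']; ring

end BoundedOnInterval

theorem moment_induction_step_general
    (K p₁ p₂ : ℝ) (hK : 1 ≤ K) (hp : p₂ ≤ p₁)
    (Vbar : ℝ → ℝ) (hmeas : Measurable Vbar)
    (hlb : ∀ y : ℝ, K ≤ y → y ^ (2 * p₂) ≤ Real.exp (2 * Vbar y))
    (hub : ∀ y : ℝ, K ≤ y → Real.exp (2 * Vbar y) ≤ y ^ (2 * p₁))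
    (n : ℕ) (hn : 1 ≤ n)
    (hconv : 2 * ((n : ℝ) - 1) * (1 + p₁ - p₂) - 2 * p₂ < -1)
    (w : ℝ → ℝ) (hwmeas : Measurable w)
    (hwnonneg : ∀ y : ℝ, K ≤ y → 0 ≤ w y)
    (C : ℝ) (hC : 0 < C)
    (hw : ∀ y : ℝ, K ≤ y → w y ≤ C * y ^ (2 * ((n : ℝ) - 1) * (1 + p₁ - p₂))) :
    (∀ ξ : ℝ, K ≤ ξ →
      (∀ y₁ : ℝ, K ≤ y₁ →
          IntegrableOn (fun y₂ => w y₂ * Real.exp (-(2 * Vbar y₂)))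
            (Set.Ioi y₁)) ∧
        IntervalIntegrable
          (fun y₁ => Real.exp (2 * Vbar y₁) *
            ∫ y₂ in Set.Ioi y₁, w y₂ * Real.exp (-(2 * Vbar y₂)))
          volume K ξ) ∧
      ∃ C' : ℝ, ∀ ξ : ℝ, K ≤ ξ →
        2 * (n : ℝ) * ∫ y₁ in K..ξ, Real.exp (2 * Vbar y₁) *
            ∫ y₂ in Set.Ioi y₁, w y₂ * Real.exp (-(2 * Vbar y₂)) ≤
          C' * ξ ^ (2 * (n : ℝ) * (1 + p₁ - p₂)) := by
  set a := 2 * ((n : ℝ) - 1) * (1 + p₁ - p₂) - 2 * p₂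
  set s := 2 * (n : ℝ) * (1 + p₁ - p₂) - 1
  set D := C / -(a + 1)
  set f := fun y => w y * Real.exp (-(2 * Vbar y))
  have hK0 : 0 < K := by linarith
  have hD : 0 ≤ D := div_nonneg hC.le (by linarith)
  have hs : 0 ≤ s := by nlinarith [(Nat.one_le_cast (α := ℝ)).mpr hn]
  have hf0 : ∀ y, K ≤ y → 0 ≤ f y := fun y hy => mul_nonneg (hwnonneg y hy) (Real.exp_nonneg _)
  have hfC : ∀ y, K ≤ y → f y ≤ C * y ^ a := fun y hy =>
    mul_exp_neg_le_rpow (hK0.trans_le hy) hC.le (hw y hy) (hlb y hy)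
  have hint : ∀ y₁, K ≤ y₁ → IntegrableOn f (Ioi y₁) := fun y₁ hy₁ =>
    integrableOn_Ioi_of_le_rpow hconv (hK0.trans_le hy₁) (by fun_prop)
      (fun x hx => hf0 x (hy₁.trans hx.le)) (fun x hx => hfC x (hy₁.trans hx.le))
  have hFle : ∀ ξ, K ≤ ξ → ∀ y ∈ uIoc K ξ,
      ‖Real.exp (2 * Vbar y) * ∫ y₂ in Ioi y, f y₂‖ ≤ D * ξ ^ s := by
    intro ξ hξ y hy
    obtain ⟨hKy, hyξ⟩ := uIoc_of_le hξ ▸ hy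
    calc _ ≤ D * y ^ (2 * p₁ + a + 1) :=
          norm_mul_setIntegral_Ioi_le_rpow hconv (hK0.trans hKy) (hint y hKy.le)
            (fun x hx => hf0 x (hKy.trans hx).le) (fun x hx => hfC x (hKy.trans hx).le)
            (Real.exp_nonneg _) (hub y hKy.le)
      _ ≤ D * ξ ^ s := by
          rw [show 2 * p₁ + a + 1 = s by ring]
          gcongr
          exact (hK0.trans hKy).le
  have hGmeas := measurable_setIntegral_Ioi (f := f) (by fun_prop)
  refine ⟨fun ξ hξ => ⟨hint, intervalIntegrable_of_norm_le_const (by fun_prop) (hFle ξ hξ)⟩,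
    2 * n * D, fun ξ hξ => ?_⟩
  have hint_le := intervalIntegral_le_mul_rpow_add_one hK0 hξ hD (hFle ξ hξ)
  rw [show 2 * (n : ℝ) * (1 + p₁ - p₂) = s + 1 by ring, mul_assoc _ D]
  gcongr

/-- induction step: Under `y^(2p₂) ≤ exp(2·V̄(y)) ≤ y^(2p₁)`
for `y ≥ K` (with `K ≥ 1`, `1/2 < p₂ ≤ p₁`), let `n ≥ 1` be an integer with
`2(n−1)(1+p₁−p₂) − 2p₂ < −1`, and let `w ≥ 0` be measurable with
`w(y) ≤ C·y^(2(n−1)(1+p₁−p₂))` for `y ≥ K`.  Then for every `ξ ≥ K` the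
quantity `2n·∫_K^ξ e^{2V̄(y₁)} (∫_{y₁}^∞ w(y₂) e^{−2V̄(y₂)} dy₂) dy₁` is
finite (all integrals involved converge) and bounded above by
`C'·ξ^(2n(1+p₁−p₂))` for some `C'` depending only on `n, p₁, p₂, C`. -/
theorem moment_induction_step
    (K p₁ p₂ : ℝ) (hK : 1 ≤ K) (hp₂ : 1 / 2 < p₂) (hp : p₂ ≤ p₁)
    (Vbar : ℝ → ℝ) (hmeas : Measurable Vbar)
    (hloc : ∀ a b : ℝ, 0 < a → ∃ M : ℝ, ∀ y ∈ Set.Icc a b, |Vbar y| ≤ M)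
    (hlb : ∀ y : ℝ, K ≤ y → y ^ (2 * p₂) ≤ Real.exp (2 * Vbar y))
    (hub : ∀ y : ℝ, K ≤ y → Real.exp (2 * Vbar y) ≤ y ^ (2 * p₁))
    (n : ℕ) (hn : 1 ≤ n)
    (hconv : 2 * ((n : ℝ) - 1) * (1 + p₁ - p₂) - 2 * p₂ < -1)
    (w : ℝ → ℝ) (hwmeas : Measurable w)
    (hwnonneg : ∀ y : ℝ, K ≤ y → 0 ≤ w y)
    (C : ℝ) (hC : 0 < C)
    (hw : ∀ y : ℝ, K ≤ y → w y ≤ C * y ^ (2 * ((n : ℝ) - 1) * (1 + p₁ - p₂))) :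
    (∀ ξ : ℝ, K ≤ ξ →
      (∀ y₁ : ℝ, K ≤ y₁ →
          IntegrableOn (fun y₂ => w y₂ * Real.exp (-(2 * Vbar y₂)))
            (Set.Ioi y₁)) ∧
        IntervalIntegrable
          (fun y₁ => Real.exp (2 * Vbar y₁) *
            ∫ y₂ in Set.Ioi y₁, w y₂ * Real.exp (-(2 * Vbar y₂)))
          volume K ξ) ∧
      ∃ C' : ℝ, ∀ ξ : ℝ, K ≤ ξ →
        2 * (n : ℝ) * ∫ y₁ in K..ξ, Real.exp (2 * Vbar y₁) *
            ∫ y₂ in Set.Ioi y₁, w y₂ * Real.exp (-(2 * Vbar y₂)) ≤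
          C' * ξ ^ (2 * (n : ℝ) * (1 + p₁ - p₂)) :=
  moment_induction_step_general K p₁ p₂ hK hp Vbar hmeas hlb hub n hn hconv w hwmeas hwnonneg C hC
    hw
end
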